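/- Let θ₁ be a non-constant inner function on the upper half-plane, analytic in a neighbourhood of a point a ∈ ℝ with θ₁(a) = 1. Then the function Λ(ξ) = (θ₁(ξ) − 1)/(ξ − a) belongs to the model space K_{θ₁} = H_p^+ ∩ θ₁H_p^- for every p ∈ (1, ∞). -/

import Mathlib

open MeasureTheory Complex Filter Set
open scoped Pointwise ENNReal

noncomputable section

/-- The open upper half-plane. -/
def UHP : Set ℂ := {z | 0 < z.im}
/-- The open lower half-plane. -/
def LHP : Set ℂ := {z | z.im < 0}

/-- Nontangential-type boundary limit from above at a real point `x`. -/
def bdryLimUp (F : ℂ → ℂ) (x : ℝ) (c : ℂ) : Prop :=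
  Filter.Tendsto (fun y : ℝ => F (x + y * Complex.I)) (nhdsWithin 0 (Set.Ioi 0)) (nhds c)

/-- Boundary limit from below at a real point `x`. -/
def bdryLimLow (F : ℂ → ℂ) (x : ℝ) (c : ℂ) : Prop :=
  Filter.Tendsto (fun y : ℝ => F (x + y * Complex.I)) (nhdsWithin 0 (Set.Iio 0)) (nhds c)

/-- The Hardy space `H_p^+` of the upper half-plane, viewed as a set of boundary
functions on `ℝ`. -/
def Hplus (p : ℝ) : Set (ℝ → ℂ) :=
  {f | MemLp f (ENNReal.ofReal p) volume ∧
    ∃ F : ℂ → ℂ, DifferentiableOn ℂ F UHP ∧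
      (∃ C : ℝ, ∀ y : ℝ, 0 < y → (∫ x : ℝ, ‖F (x + y * Complex.I)‖ ^ p) ≤ C) ∧
      ∀ᵐ x : ℝ, bdryLimUp F x (f x)}

/-- The Hardy space `H_p^-` of the lower half-plane, as boundary functions on `ℝ`. -/
def Hminus (p : ℝ) : Set (ℝ → ℂ) :=
  {f | MemLp f (ENNReal.ofReal p) volume ∧
    ∃ F : ℂ → ℂ, DifferentiableOn ℂ F LHP ∧
      (∃ C : ℝ, ∀ y : ℝ, y < 0 → (∫ x : ℝ, ‖F (x + y * Complex.I)‖ ^ p) ≤ C) ∧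
      ∀ᵐ x : ℝ, bdryLimLow F x (f x)}

/-- `H_∞^+`: boundary functions of bounded analytic functions on `ℂ⁺`. -/
def HinfPlus : Set (ℝ → ℂ) :=
  {f | ∃ F : ℂ → ℂ, DifferentiableOn ℂ F UHP ∧ (∃ C : ℝ, ∀ z ∈ UHP, ‖F z‖ ≤ C) ∧
      ∀ᵐ x : ℝ, bdryLimUp F x (f x)}

/-- `H_∞^-`: boundary functions of bounded analytic functions on `ℂ⁻`. -/
def HinfMinus : Set (ℝ → ℂ) :=
  {f | ∃ F : ℂ → ℂ, DifferentiableOn ℂ F LHP ∧ (∃ C : ℝ, ∀ z ∈ LHP, ‖F z‖ ≤ C) ∧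
      ∀ᵐ x : ℝ, bdryLimLow F x (f x)}

/-- Invertible elements of `H_∞^+`. -/
def GHinfPlus (h : ℝ → ℂ) : Prop :=
  h ∈ HinfPlus ∧ ∃ k ∈ HinfPlus, ∀ᵐ x : ℝ, h x * k x = 1

/-- Invertible elements of `H_∞^-`. -/
def GHinfMinus (h : ℝ → ℂ) : Prop :=
  h ∈ HinfMinus ∧ ∃ k ∈ HinfMinus, ∀ᵐ x : ℝ, h x * k x = 1

/-- Inner function on the upper half-plane: analytic and bounded by `1` on `ℂ⁺`, with
unimodular boundary values a.e. on `ℝ` (its values on `ℝ` serve as the boundary trace). -/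
def InnerUHP (θ : ℂ → ℂ) : Prop :=
  DifferentiableOn ℂ θ UHP ∧ (∀ z ∈ UHP, ‖θ z‖ ≤ 1) ∧
  (∀ᵐ x : ℝ, ‖θ (x : ℂ)‖ = 1) ∧ (∀ᵐ x : ℝ, bdryLimUp θ x (θ (x : ℂ)))

/-- Inner function on the lower half-plane. -/
def InnerLHP (θ : ℂ → ℂ) : Prop :=
  DifferentiableOn ℂ θ LHP ∧ (∀ z ∈ LHP, ‖θ z‖ ≤ 1) ∧
  (∀ᵐ x : ℝ, ‖θ (x : ℂ)‖ = 1) ∧ (∀ᵐ x : ℝ, bdryLimLow θ x (θ (x : ℂ)))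

/-- Non-constancy (on the upper half-plane). -/
def Nonconst (θ : ℂ → ℂ) : Prop := ¬ ∃ c : ℂ, ∀ z ∈ UHP, θ z = c

/-- Non-constancy on the lower half-plane. -/
def NonconstLHP (θ : ℂ → ℂ) : Prop := ¬ ∃ c : ℂ, ∀ z ∈ LHP, θ z = c

/-- The (generalised) Toeplitz kernel of a symbol `g` in `H_p^+`:
`ker T_g = {f ∈ H_p^+ : g f ∈ H_p^-}`. -/
def kerT (p : ℝ) (g : ℝ → ℂ) : Set (ℝ → ℂ) :=
  {f | f ∈ Hplus p ∧ (fun x => g x * f x) ∈ Hminus p}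

/-- Boundary trace of a function on the closed upper half-plane. -/
def bd (θ : ℂ → ℂ) : ℝ → ℂ := fun x => θ (x : ℂ)

/-- The model space `K_θ^p = H_p^+ ∩ θ H_p^- = ker T_{θ̄}`. -/
def Kmodel (p : ℝ) (θ : ℂ → ℂ) : Set (ℝ → ℂ) :=
  kerT p (fun x => (starRingEnd ℂ) (θ (x : ℂ)))

/-- Pointwise multiplication of a set of boundary functions by a fixed function. -/
def mulSet (h : ℝ → ℂ) (K : Set (ℝ → ℂ)) : Set (ℝ → ℂ) :=
  (fun f => fun x => h x * f x) '' K

/-- `g ∈ L_∞(ℝ)`. -/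
def IsLinf (g : ℝ → ℂ) : Prop :=
  AEStronglyMeasurable g volume ∧ ∃ C : ℝ, ∀ᵐ x : ℝ, ‖g x‖ ≤ C

/-- `K = A ⊕ B`: `K` is the (a.e.) direct sum of `A` and `B`. -/
def DirectSumEq (K A B : Set (ℝ → ℂ)) : Prop :=
  K = A + B ∧ ∀ f ∈ A, f ∈ B → f =ᵐ[volume] (0 : ℝ → ℂ)

/-- `θ₂ ⪯ θ₁` : `θ₂` divides `θ₁` in the sense that `θ₁ = θ₂ θ₃` with `θ₃` inner. -/
def Divides (θ₂ θ₁ : ℂ → ℂ) : Prop :=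
  ∃ θ₃ : ℂ → ℂ, InnerUHP θ₃ ∧ ∀ z ∈ UHP, θ₁ z = θ₂ z * θ₃ z

/-- `θ₂ ≺ θ₁` : `θ₁ = θ₂ θ₃` with `θ₃` a non-constant inner function. -/
def DividesStrict (θ₂ θ₁ : ℂ → ℂ) : Prop :=
  ∃ θ₃ : ℂ → ℂ, InnerUHP θ₃ ∧ Nonconst θ₃ ∧ ∀ z ∈ UHP, θ₁ z = θ₂ z * θ₃ z

/-- `K` is the minimal Toeplitz kernel of `φ`: it is a Toeplitz kernel (with `L_∞`
symbol) containing `φ` and contained in every Toeplitz kernel containing `φ`. -/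
def IsMinKernel (p : ℝ) (φ : ℝ → ℂ) (K : Set (ℝ → ℂ)) : Prop :=
  (∃ g : ℝ → ℂ, IsLinf g ∧ K = kerT p g) ∧ φ ∈ K ∧
  ∀ g : ℝ → ℂ, IsLinf g → φ ∈ kerT p g → K ⊆ kerT p g

/-- Outer function in `H_p^+`: a nonzero element with no non-constant inner factor. -/
def IsOuterPlusLp (p : ℝ) (f : ℝ → ℂ) : Prop :=
  f ∈ Hplus p ∧ ¬ f =ᵐ[volume] (0 : ℝ → ℂ) ∧
  ∀ θ : ℂ → ℂ, InnerUHP θ → (∃ g ∈ Hplus p, ∀ᵐ x : ℝ, f x = θ (x : ℂ) * g x) → ¬ Nonconst θ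

/-- Outer function in `H_p^-`. -/
def IsOuterMinusLp (p : ℝ) (f : ℝ → ℂ) : Prop :=
  f ∈ Hminus p ∧ ¬ f =ᵐ[volume] (0 : ℝ → ℂ) ∧
  ∀ θ : ℂ → ℂ, InnerLHP θ → (∃ g ∈ Hminus p, ∀ᵐ x : ℝ, f x = θ (x : ℂ) * g x) → ¬ NonconstLHP θ

/-- Outer function in `H_∞^+`. -/
def IsOuterPlusInf (f : ℝ → ℂ) : Prop :=
  f ∈ HinfPlus ∧ ¬ f =ᵐ[volume] (0 : ℝ → ℂ) ∧
  ∀ θ : ℂ → ℂ, InnerUHP θ → (∃ g ∈ HinfPlus, ∀ᵐ x : ℝ, f x = θ (x : ℂ) * g x) → ¬ Nonconst θ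

/-- Outer function in `H_∞^-`. -/
def IsOuterMinusInf (f : ℝ → ℂ) : Prop :=
  f ∈ HinfMinus ∧ ¬ f =ᵐ[volume] (0 : ℝ → ℂ) ∧
  ∀ θ : ℂ → ℂ, InnerLHP θ → (∃ g ∈ HinfMinus, ∀ᵐ x : ℝ, f x = θ (x : ℂ) * g x) → ¬ NonconstLHP θ

end

/-! Since `θ₁` is differentiable at `a`, the difference quotient `(θ₁ z - 1)/(z - a)` is bounded
near `a`, and away from `a` it is at most `2/|z - a|` because `|θ₁| ≤ 1`. So on every horizontal
line of the closed upper half-plane it is dominated by `K (1 + |x - a|)⁻¹ ∈ L^p`, which puts `Λ`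
in `H_p^+`. On `ℝ`, `|θ₁| = 1` gives `θ̄₁ Λ = conj (-Λ)`, and the reflection `F ↦ conj ∘ F ∘ conj`
maps `H_p^+` into `H_p^-`. -/

open scoped ComplexConjugate Topology

lemma isOpen_UHP : IsOpen UHP := isOpen_lt continuous_const continuous_im

lemma add_mul_I_mem_UHP (x : ℝ) {y : ℝ} (hy : 0 < y) : (x + y * I : ℂ) ∈ UHP := by
  simpa [UHP] using hy

lemma conj_mem_UHP {z : ℂ} (hz : z ∈ LHP) : conj z ∈ UHP := by
  simpa [UHP, LHP] using hz

lemma tendsto_add_mul_I_nhdsGT (x : ℝ) :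
    Tendsto (fun y : ℝ => (x + y * I : ℂ)) (𝓝[>] 0) (𝓝 x) := by
  have h : Continuous fun y : ℝ => (x + y * I : ℂ) := by fun_prop
  simpa using (h.tendsto 0).mono_left nhdsWithin_le_nhds

lemma DifferentiableOn.conj_comp_conj {F : ℂ → ℂ} (hF : DifferentiableOn ℂ F UHP) :
    DifferentiableOn ℂ (conj ∘ F ∘ conj) LHP := by
  intro z hz
  have hd : DifferentiableAt ℂ F (conj z) :=
    hF.differentiableAt (isOpen_UHP.mem_nhds (conj_mem_UHP hz))
  simpa using hd.conj_conj.differentiableWithinAt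

lemma aestronglyMeasurable_of_bdryLimUp {F : ℂ → ℂ} {f : ℝ → ℂ} (hF : ContinuousOn F UHP)
    (hlim : ∀ᵐ x : ℝ, bdryLimUp F x (f x)) : AEStronglyMeasurable f volume := by
  have hseq : Tendsto (fun n : ℕ => 1 / ((n : ℝ) + 1)) atTop (𝓝[>] 0) :=
    tendsto_nhdsWithin_of_tendsto_nhds_of_eventually_within _
      tendsto_one_div_add_atTop_nhds_zero_nat
      (Eventually.of_forall fun n => mem_Ioi.2 (by positivity))
  refine aestronglyMeasurable_of_tendsto_ae (u := atTop)
    (f := fun (n : ℕ) (x : ℝ) => F (x + (1 / ((n : ℝ) + 1) : ℝ) * I)) (fun n => ?_) ?_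
  · exact (hF.comp_continuous (by fun_prop)
      fun x => add_mul_I_mem_UHP x (by positivity)).aestronglyMeasurable
  · filter_upwards [hlim] with x hx using hx.comp hseq

lemma memLp_inv_one_add_abs_sub (a : ℝ) {p : ℝ} (hp : 1 < p) :
    MemLp (fun x : ℝ => (1 + |x - a|)⁻¹) (ENNReal.ofReal p) volume := by
  have hp0 : 0 < p := by linarith
  refine (integrable_norm_rpow_iff (by fun_prop) (by simpa using hp0) ENNReal.ofReal_ne_top).1 ?_
  have h := (integrable_one_add_norm (E := ℝ) (μ := volume) (r := p) (by simpa using hp))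
  refine (h.comp_sub_right a).congr (Eventually.of_forall fun x => ?_)
  have hx : 0 < 1 + |x - a| := by positivity
  simp [Real.norm_eq_abs, abs_of_pos hx, ENNReal.toReal_ofReal hp0.le, Real.inv_rpow hx.le,
    Real.rpow_neg hx.le]

lemma neg_mem_Hplus {p : ℝ} {f : ℝ → ℂ} (hf : f ∈ Hplus p) : -f ∈ Hplus p := by
  obtain ⟨hfp, F, hF, ⟨C, hC⟩, hlim⟩ := hf
  refine ⟨hfp.neg, -F, hF.neg, ⟨C, by simpa using hC⟩, ?_⟩
  filter_upwards [hlim] with x hx using hx.neg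

lemma mem_Hminus_of_ae_eq {p : ℝ} {f g : ℝ → ℂ} (hf : f ∈ Hminus p) (hfg : f =ᵐ[volume] g) :
    g ∈ Hminus p := by
  obtain ⟨hfp, F, hF, hC, hlim⟩ := hf
  refine ⟨hfp.ae_eq hfg, F, hF, hC, ?_⟩
  filter_upwards [hlim, hfg] with x hx hx' using hx' ▸ hx

lemma conj_mem_Hminus {p : ℝ} {f : ℝ → ℂ} (hf : f ∈ Hplus p) :
    (fun x => conj (f x)) ∈ Hminus p := by
  obtain ⟨hfp, F, hF, ⟨C, hC⟩, hlim⟩ := hf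
  have hconj (x y : ℝ) : conj ((x : ℂ) + y * I) = x + ((-y : ℝ) : ℂ) * I := by simp
  refine ⟨hfp.star, conj ∘ F ∘ conj, hF.conj_comp_conj, ⟨C, fun y hy => ?_⟩, ?_⟩
  · simpa [hconj] using hC (-y) (neg_pos.2 hy)
  · filter_upwards [hlim] with x hx
    have hneg : Tendsto Neg.neg (𝓝[<] (0 : ℝ)) (𝓝[>] 0) := by
      simpa using tendsto_neg_nhdsLT (a := (0 : ℝ))
    have h := ((continuous_conj.tendsto _).comp hx).comp hneg
    simpa [bdryLimLow, Function.comp_def, hconj] using h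

lemma mem_Hplus_of_norm_le {p : ℝ} (hp : 0 < p) {F : ℂ → ℂ} {f : ℝ → ℂ} {g : ℝ → ℝ}
    (hg : MemLp g (ENNReal.ofReal p) volume) (hF : DifferentiableOn ℂ F UHP)
    (hFg : ∀ z ∈ UHP, ‖F z‖ ≤ g z.re) (hlim : ∀ᵐ x : ℝ, bdryLimUp F x (f x)) :
    f ∈ Hplus p := by
  have hgp : Integrable (fun x => ‖g x‖ ^ p) volume := by
    simpa [ENNReal.toReal_ofReal hp.le] using
      hg.integrable_norm_rpow (by simpa using hp) ENNReal.ofReal_ne_top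
  have hFg' (x : ℝ) {y : ℝ} (hy : 0 < y) : ‖F (x + y * I)‖ ≤ g x := by
    simpa using hFg _ (add_mul_I_mem_UHP x hy)
  have hfg : ∀ᵐ x : ℝ, ‖f x‖ ≤ g x := by
    filter_upwards [hlim] with x hx
    exact le_of_tendsto hx.norm (eventually_nhdsWithin_of_forall fun y hy => hFg' x hy)
  refine ⟨hg.mono' (aestronglyMeasurable_of_bdryLimUp hF.continuousOn hlim) hfg, F, hF,
    ⟨∫ x, ‖g x‖ ^ p, fun y hy => ?_⟩, hlim⟩
  refine integral_mono_of_nonneg (Eventually.of_forall fun x => by positivity) hgp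
    (Eventually.of_forall fun x => ?_)
  exact Real.rpow_le_rpow (norm_nonneg _) ((hFg' x hy).trans (le_abs_self _)) hp.le

lemma bdryLimUp.div_sub {F : ℂ → ℂ} {x : ℝ} {c : ℂ} (h : bdryLimUp F x c) (b : ℂ) {a : ℂ}
    (hxa : (x : ℂ) ≠ a) : bdryLimUp (fun z => (F z - b) / (z - a)) x ((c - b) / (x - a)) :=
  (h.sub tendsto_const_nhds).div ((tendsto_add_mul_I_nhdsGT x).sub_const a) (sub_ne_zero.2 hxa)

lemma DifferentiableAt.exists_norm_div_sub_le {θ : ℂ → ℂ} {a : ℂ} (hd : DifferentiableAt ℂ θ a)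
    (R : ℝ) :
    ∃ K ≥ 0, ∀ z, ‖θ z - θ a‖ ≤ R → ‖(θ z - θ a) / (z - a)‖ ≤ K * (1 + ‖z - a‖)⁻¹ := by
  obtain ⟨c, hc⟩ := hd.isBigO_sub.bound
  obtain ⟨δ, hδ, hball⟩ := Metric.eventually_nhds_iff.1 hc
  set m := max (max c 0) (R / δ)
  have hm0 : 0 ≤ m := le_max_of_le_left (le_max_right _ _)
  refine ⟨(1 + δ) * m, by positivity, fun z hz => ?_⟩
  rcases eq_or_ne z a with rfl | hza
  · simpa using by positivity
  set r := ‖z - a‖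
  have hr : 0 < r := norm_pos_iff.2 (sub_ne_zero.2 hza)
  rw [norm_div, div_le_iff₀ hr, mul_assoc, inv_mul_eq_div, mul_comm, div_mul_eq_mul_div,
    le_div_iff₀ (by positivity)]
  rcases lt_or_ge r δ with hrδ | hδr
  · have hnear : ‖θ z - θ a‖ ≤ m * r :=
      (hball (by rwa [dist_eq_norm])).trans (by gcongr; exact le_max_of_le_left (le_max_left _ _))
    calc ‖θ z - θ a‖ * (1 + r) ≤ m * r * (1 + r) := by gcongr
      _ ≤ r * ((1 + δ) * m) := by nlinarith [mul_nonneg hm0 hr.le]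
  · have hfar : ‖θ z - θ a‖ ≤ m * δ := hz.trans ((div_le_iff₀ hδ).1 (le_max_right _ _))
    nlinarith

theorem stmt5_general (θ₁ : ℂ → ℂ) (hθ : InnerUHP θ₁) (a : ℝ)
    (han : ∃ U ∈ nhds (a : ℂ), ∀ z ∈ U, AnalyticAt ℂ θ₁ z) (ha1 : θ₁ (a : ℂ) = 1)
    (p : ℝ) (hp : 1 < p) :
    (fun x : ℝ => (θ₁ (x : ℂ) - 1) / ((x : ℂ) - (a : ℂ))) ∈ Kmodel p θ₁ := by
  obtain ⟨hθd, hθb, hθu, hθl⟩ := hθ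
  obtain ⟨U, hU, hUan⟩ := han
  obtain ⟨K, hK0, hK⟩ :=
    (hUan _ (mem_of_mem_nhds hU)).differentiableAt.exists_norm_div_sub_le 2
  rw [ha1] at hK
  set Λ := fun x : ℝ => (θ₁ (x : ℂ) - 1) / ((x : ℂ) - (a : ℂ))
  have hF : DifferentiableOn ℂ (fun z => (θ₁ z - 1) / (z - a)) UHP :=
    (hθd.sub_const 1).div (differentiableOn_id.sub_const _) fun z hz h => by
      simp [UHP, sub_eq_zero.1 h] at hz
  have hΛ : Λ ∈ Hplus p := by
    refine mem_Hplus_of_norm_le (by linarith) ((memLp_inv_one_add_abs_sub a hp).const_mul K)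
      hF (fun z hz => ?_) ?_
    · refine (hK z ((norm_sub_le _ _).trans (by simpa using by linarith [hθb z hz]))).trans ?_
      have hre : |z.re - a| ≤ ‖z - a‖ := by simpa using abs_re_le_norm (z - a)
      gcongr
    · filter_upwards [hθl, Measure.ae_ne volume a] with x hx hxa
      exact hx.div_sub 1 (ofReal_injective.ne hxa)
  have hconj : (fun x => conj ((-Λ) x)) =ᵐ[volume] fun x => conj (θ₁ x) * Λ x := by
    filter_upwards [hθu] with x hx
    have hunit : conj (θ₁ x) * θ₁ x = 1 := by
      rw [mul_comm, mul_conj, normSq_eq_norm_sq, hx]; norm_num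
    simp only [Λ, Pi.neg_apply, map_neg, map_div₀, map_sub, map_one, conj_ofReal]
    rw [← mul_div_assoc, mul_sub, hunit, mul_one, ← neg_div, neg_sub]
  exact ⟨hΛ, mem_Hminus_of_ae_eq (conj_mem_Hminus (neg_mem_Hplus hΛ)) hconj⟩

/-- if `θ₁` is a non-constant inner function, analytic near `a ∈ ℝ`
with `θ₁(a) = 1`, then `Λ(ξ) = (θ₁(ξ) − 1)/(ξ − a)` belongs to `K_{θ₁}^p` for all
`p ∈ (1,∞)`. -/
theorem stmt5 (θ₁ : ℂ → ℂ) (hθ : InnerUHP θ₁) (hnc : Nonconst θ₁) (a : ℝ)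
    (han : ∃ U ∈ nhds (a : ℂ), ∀ z ∈ U, AnalyticAt ℂ θ₁ z) (ha1 : θ₁ (a : ℂ) = 1)
    (p : ℝ) (hp : 1 < p) :
    (fun x : ℝ => (θ₁ (x : ℂ) - 1) / ((x : ℂ) - (a : ℂ))) ∈ Kmodel p θ₁ :=
  stmt5_general θ₁ hθ a han ha1 p hp
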